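/- arXiv:2207.09004 — 3 statements merged into one kernel-verified Lean document; each statement's English description precedes it below -/
import Mathlib

section
/- Let K : ℝ → ℝ be a nonnegative kernel supported on [-1/2, 1/2], symmetric about 0, with ∫ K = 1, and let 0 < h ≤ 1. Define ψ_h(u) = ∫_0^1 (1/h) K((u - z)/h) dz. Then for every u ∈ [0,1], 1/2 ≤ ψ_h(u) ≤ 1. -/
open MeasureTheory

theorem stmt_2 (K : ℝ → ℝ) (hKmeas : Measurable K) (hKpos : ∀ x, 0 ≤ K x)
    (hKsupp : ∀ x, 1/2 < |x| → K x = 0) (hKsymm : ∀ x, K (-x) = K x)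
    (hKint : ∫ x, K x = 1) (h : ℝ) (hh : 0 < h) (hh1 : h ≤ 1) :
    ∀ u ∈ Set.Icc (0:ℝ) 1,
      1/2 ≤ (∫ z in Set.Icc (0:ℝ) 1, h⁻¹ * K ((u - z) / h)) ∧
      (∫ z in Set.Icc (0:ℝ) 1, h⁻¹ * K ((u - z) / h)) ≤ 1 := by
  have hKi : Integrable K := by
    by_contra hc
    rw [integral_undef hc] at hKint
    norm_num at hKint
  have hne : h ≠ 0 := ne_of_gt hh
  intro u hu
  obtain ⟨hu0, hu1⟩ := hu
  -- rewrite the integral as an interval integral of K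
  have key : (∫ z in Set.Icc (0:ℝ) 1, h⁻¹ * K ((u - z) / h))
      = ∫ x in (u-1)/h..(u/h), K x := by
    rw [MeasureTheory.integral_Icc_eq_integral_Ioc,
        ← intervalIntegral.integral_of_le (by norm_num : (0:ℝ) ≤ 1),
        intervalIntegral.integral_const_mul]
    have h2 : (∫ z in (0:ℝ)..1, K ((u - z)/h)) = ∫ x in (u-1)..u, K (x/h) := by
      have := intervalIntegral.integral_comp_sub_left (a := (0:ℝ)) (b := 1)
        (fun x => K (x/h)) u
      simpa using this
    rw [h2, intervalIntegral.integral_comp_div (f := K) hne]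
    simp [smul_eq_mul, ← mul_assoc, inv_mul_cancel₀ hne]
  rw [key]
  -- total integral over [-1/2,1/2] is 1
  have hItot : (∫ x in (-(1:ℝ)/2)..(1/2), K x) = 1 := by
    rw [intervalIntegral.integral_of_le (by norm_num : (-(1:ℝ)/2) ≤ 1/2),
        ← MeasureTheory.integral_Icc_eq_integral_Ioc,
        MeasureTheory.setIntegral_eq_integral_of_forall_compl_eq_zero, hKint]
    intro x hx
    apply hKsupp
    rw [Set.mem_Icc] at hx
    push_neg at hx
    rw [lt_abs]
    rcases lt_or_ge x (-(1/2)) with h' | h'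
    · right; linarith
    · left; exact hx (by linarith)
  have hII : ∀ a b : ℝ, IntervalIntegrable K volume a b :=
    fun a b => hKi.intervalIntegrable
  have hsymm : (∫ x in (-(1:ℝ)/2)..0, K x) = ∫ x in (0:ℝ)..(1/2), K x := by
    have := intervalIntegral.integral_comp_neg (a := (0:ℝ)) (b := 1/2) K
    simp only [neg_zero] at this
    rw [show (-(1:ℝ)/2) = -(1/2) from by norm_num, ← this]
    simp only [hKsymm]
  have hadd : (∫ x in (-(1:ℝ)/2)..0, K x) + (∫ x in (0:ℝ)..(1/2), K x) = 1 := by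
    rw [intervalIntegral.integral_add_adjacent_intervals (hII _ _) (hII _ _), hItot]
  have hhalf1 : (∫ x in (0:ℝ)..(1/2), K x) = 1/2 := by linarith
  have hhalf2 : (∫ x in (-(1:ℝ)/2)..0, K x) = 1/2 := by linarith
  -- generic monotonicity: if [c,d] ⊆ [a,b] then ∫ c..d ≤ ∫ a..b
  have hmono : ∀ a b c d : ℝ, a ≤ c → c ≤ d → d ≤ b →
      (∫ x in c..d, K x) ≤ ∫ x in a..b, K x := by
    intro a b c d hac hcd hdb
    have e1 : (∫ x in a..c, K x) + (∫ x in c..d, K x) + (∫ x in d..b, K x)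
        = ∫ x in a..b, K x := by
      rw [intervalIntegral.integral_add_adjacent_intervals (hII _ _) (hII _ _),
          intervalIntegral.integral_add_adjacent_intervals (hII _ _) (hII _ _)]
    have n1 : 0 ≤ ∫ x in a..c, K x :=
      intervalIntegral.integral_nonneg hac (fun x _ => hKpos x)
    have n2 : 0 ≤ ∫ x in d..b, K x :=
      intervalIntegral.integral_nonneg hdb (fun x _ => hKpos x)
    linarith
  constructor
  · -- lower bound
    have hlb : (u-1)/h ≤ 0 := div_nonpos_of_nonpos_of_nonneg (by linarith) hh.le
    have hub : 0 ≤ u/h := div_nonneg hu0 hh.le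
    rcases le_or_gt (1/2) (u/h) with hc | hc
    · calc (1:ℝ)/2 = ∫ x in (0:ℝ)..(1/2), K x := hhalf1.symm
        _ ≤ ∫ x in (u-1)/h..(u/h), K x := hmono _ _ _ _ hlb (by norm_num) hc
    · have hc2 : (u-1)/h ≤ -(1/2) := by
        rw [div_le_iff₀ hh]
        have : u < h/2 := by
          have := (div_lt_iff₀ hh).mp hc
          linarith
        linarith
      calc (1:ℝ)/2 = ∫ x in (-(1:ℝ)/2)..0, K x := hhalf2.symm
        _ ≤ ∫ x in (u-1)/h..(u/h), K x := by
            apply hmono _ _ _ _ (by linarith) (by norm_num) hub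
  · -- upper bound
    have hle : (u-1)/h ≤ u/h := by gcongr <;> linarith
    rw [intervalIntegral.integral_of_le hle]
    calc (∫ x in Set.Ioc ((u-1)/h) (u/h), K x) ≤ ∫ x, K x :=
          setIntegral_le_integral hKi (Filter.Eventually.of_forall hKpos)
      _ = 1 := hKint
end

section
/- Let (Z_n) and (Z̃_n) be sequences of real random variables with |Z_n - Z̃_n| = O_P(r_n) for a sequence r_n → 0, and assume each Z̃_n satisfies the anti-concentration bound P(|Z̃_n - t| ≤ ε) ≤ C(1 ∨ E Z̃_n) ε for all t, ε > 0 with a uniform constant C, and r_n · E Z̃_n → 0, E Z̃_n ≥ 0. Then sup_{t ∈ ℝ} |P(Z_n ≤ t) - P(Z̃_n ≤ t)| → 0. -/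
open MeasureTheory Filter Topology

/-!
Whenever `Z` and `Z̃` are within `δ` of each other, the events `Z ≤ t` and `Z̃ ≤ t` can only differ
if `Z̃` lies within `δ` of `t`. Hence the Kolmogorov distance between their laws is at most
`sup_t P(|Z̃ - t| ≤ δ) + P(|Z - Z̃| > δ)`. Taking `δ = (M + 1) r_n`, the second term is small by the
`O_P(r_n)` assumption, and the first is at most `C (M + 1) (r_n ⊔ r_n E Z̃_n)` by anti-concentration,
which tends to `0`.
-/

lemma le_iff_le_or_abs_sub_le_or_lt_abs_sub (x y t δ : ℝ) :
    (x ≤ t ↔ y ≤ t) ∨ |y - t| ≤ δ ∨ δ < |x - y| := by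
  rcases lt_or_ge δ |x - y| with hfar | hclose
  · exact .inr (.inr hfar)
  rcases le_or_gt |y - t| δ with hnear | hfar
  · exact .inr (.inl hnear)
  rw [abs_le] at hclose
  left
  rcases lt_abs.mp hfar with h | h <;> constructor <;> intro <;> linarith

section Kolmogorov

variable {Ω : Type*} [MeasurableSpace Ω] (μ : Measure Ω) [IsFiniteMeasure μ] (X Y : Ω → ℝ)

lemma measureReal_le_add_of_subset_union {s t u : Set Ω} (h : s ⊆ t ∪ u) :
    μ.real s ≤ μ.real t + μ.real u :=
  (measureReal_mono h).trans (measureReal_union_le t u)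

lemma abs_measureReal_le_sub_measureReal_le_le (t δ : ℝ) :
    |μ.real {ω | X ω ≤ t} - μ.real {ω | Y ω ≤ t}| ≤
      μ.real {ω | |Y ω - t| ≤ δ} + μ.real {ω | δ < |X ω - Y ω|} := by
  set S := {ω | |Y ω - t| ≤ δ} ∪ {ω | δ < |X ω - Y ω|}
  have key := fun ω ↦ le_iff_le_or_abs_sub_le_or_lt_abs_sub (X ω) (Y ω) t δ
  have hXY : μ.real {ω | X ω ≤ t} ≤ μ.real {ω | Y ω ≤ t} + μ.real S :=
    measureReal_le_add_of_subset_union μ fun ω hω ↦ by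
      rcases key ω with h | h | h
      exacts [.inl (h.mp hω), .inr (.inl h), .inr (.inr h)]
  have hYX : μ.real {ω | Y ω ≤ t} ≤ μ.real {ω | X ω ≤ t} + μ.real S :=
    measureReal_le_add_of_subset_union μ fun ω hω ↦ by
      rcases key ω with h | h | h
      exacts [.inl (h.mpr hω), .inr (.inl h), .inr (.inr h)]
  have hS : μ.real S ≤ μ.real {ω | |Y ω - t| ≤ δ} + μ.real {ω | δ < |X ω - Y ω|} :=
    measureReal_union_le _ _
  exact abs_sub_le_iff.mpr ⟨by linarith, by linarith⟩

lemma iSup_abs_measureReal_le_sub_measureReal_le_le {δ K : ℝ}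
    (hK : ∀ t, μ.real {ω | |Y ω - t| ≤ δ} ≤ K) :
    ⨆ t, |μ.real {ω | X ω ≤ t} - μ.real {ω | Y ω ≤ t}| ≤
      K + μ.real {ω | δ < |X ω - Y ω|} := by
  have hK0 : 0 ≤ K := measureReal_nonneg.trans (hK 0)
  refine Real.iSup_le (fun t ↦ ?_) (add_nonneg hK0 measureReal_nonneg)
  exact (abs_measureReal_le_sub_measureReal_le_le μ X Y t δ).trans (by gcongr; exact hK t)

end Kolmogorov

lemma tendsto_nhds_zero_of_forall_eventually_le {α : Type*} {l : Filter α} {f : α → ℝ}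
    (h0 : ∀ x, 0 ≤ f x) (h : ∀ ε > 0, ∀ᶠ x in l, f x ≤ ε) : Tendsto f l (𝓝 0) :=
  tendsto_order.2 ⟨fun _ ha ↦ .of_forall fun x ↦ ha.trans_le (h0 x),
    fun _ ha ↦ (h _ (half_pos ha)).mono fun _ hx ↦ hx.trans_lt (half_lt_self ha)⟩

lemma tendsto_max_one_mul_of_tendsto_mul {α : Type*} {l : Filter α} {r E : α → ℝ}
    (hr : ∀ x, 0 ≤ r x) (hr0 : Tendsto r l (𝓝 0)) (hrE : Tendsto (fun x ↦ r x * E x) l (𝓝 0)) :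
    Tendsto (fun x ↦ (1 ⊔ E x) * r x) l (𝓝 0) := by
  have h := hr0.max hrE
  rw [max_self] at h
  refine h.congr fun x ↦ ?_
  rw [max_mul_of_nonneg _ _ (hr x), one_mul, mul_comm (E x)]

theorem stmt_10_general {Ω : ℕ → Type*} [∀ n, MeasurableSpace (Ω n)]
    (P : ∀ n, Measure (Ω n)) [∀ n, IsProbabilityMeasure (P n)]
    (Z Zt : ∀ n, Ω n → ℝ)
    (r : ℕ → ℝ) (hr : ∀ n, 0 < r n) (hr0 : Tendsto r atTop (nhds 0))
    (hOP : ∀ δ > (0:ℝ), ∃ M N : ℕ, ∀ n ≥ N,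
      ((P n) {ω | M * r n < |Z n ω - Zt n ω|}).toReal < δ)
    (C : ℝ) (hC : 0 < C)
    (hAC : ∀ (n : ℕ) (t ε : ℝ), 0 < ε →
      (P n) {ω | |Zt n ω - t| ≤ ε} ≤
        ENNReal.ofReal (C * (1 ⊔ ∫ ω, Zt n ω ∂(P n)) * ε))
    (hrE : Tendsto (fun n => r n * ∫ ω, Zt n ω ∂(P n)) atTop (nhds 0)) :
    Tendsto (fun n => ⨆ t : ℝ,
        |((P n) {ω | Z n ω ≤ t}).toReal - ((P n) {ω | Zt n ω ≤ t}).toReal|)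
      atTop (nhds 0) := by
  refine tendsto_nhds_zero_of_forall_eventually_le
    (fun n ↦ Real.iSup_nonneg fun t ↦ abs_nonneg _) fun ε hε ↦ ?_
  obtain ⟨M, N, hM⟩ := hOP (ε / 2) (half_pos hε)
  -- `M` may be `0`, so the anti-concentration bound is applied at the positive radius `(M + 1) r n`.
  have hnear : Tendsto (fun n ↦ C * (1 ⊔ ∫ ω, Zt n ω ∂(P n)) * ((M + 1) * r n)) atTop (𝓝 0) := by
    simpa [mul_assoc, mul_left_comm _ ((M : ℝ) + 1)] using
      ((tendsto_max_one_mul_of_tendsto_mul (fun n ↦ (hr n).le) hr0 hrE).const_mul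
        (C * (M + 1)))
  filter_upwards [hnear.eventually (ge_mem_nhds (half_pos hε)), eventually_ge_atTop N]
    with n hn hnN
  have hρ : 0 < ((M : ℝ) + 1) * r n := mul_pos (by positivity) (hr n)
  have hfar : (P n).real {ω | (M + 1) * r n < |Z n ω - Zt n ω|} ≤ ε / 2 :=
    (measureReal_mono fun ω hω ↦ (mul_le_mul_of_nonneg_right (by linarith) (hr n).le).trans_lt
      hω).trans (hM n hnN).le
  have hsup := iSup_abs_measureReal_le_sub_measureReal_le_le (P n) (Z n) (Zt n) (δ := (M + 1) * r n)
    fun t ↦ ENNReal.toReal_le_of_le_ofReal (by positivity) (hAC n t _ hρ)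
  exact hsup.trans (by linarith)

theorem stmt_10 {Ω : ℕ → Type*} [∀ n, MeasurableSpace (Ω n)]
    (P : ∀ n, Measure (Ω n)) [∀ n, IsProbabilityMeasure (P n)]
    (Z Zt : ∀ n, Ω n → ℝ)
    (hZ : ∀ n, Measurable (Z n)) (hZt : ∀ n, Measurable (Zt n))
    (r : ℕ → ℝ) (hr : ∀ n, 0 < r n) (hr0 : Tendsto r atTop (nhds 0))
    (hOP : ∀ δ > (0:ℝ), ∃ M N : ℕ, ∀ n ≥ N,
      ((P n) {ω | M * r n < |Z n ω - Zt n ω|}).toReal < δ)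
    (C : ℝ) (hC : 0 < C)
    (hEnonneg : ∀ n, 0 ≤ ∫ ω, Zt n ω ∂(P n))
    (hAC : ∀ (n : ℕ) (t ε : ℝ), 0 < ε →
      (P n) {ω | |Zt n ω - t| ≤ ε} ≤
        ENNReal.ofReal (C * (1 ⊔ ∫ ω, Zt n ω ∂(P n)) * ε))
    (hrE : Tendsto (fun n => r n * ∫ ω, Zt n ω ∂(P n)) atTop (nhds 0)) :
    Tendsto (fun n => ⨆ t : ℝ,
        |((P n) {ω | Z n ω ≤ t}).toReal - ((P n) {ω | Zt n ω ≤ t}).toReal|)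
      atTop (nhds 0) :=
  stmt_10_general P Z Zt r hr hr0 hOP C hC hAC hrE
end

section
/- Let F : [a,b] → [0,1] be a strictly increasing continuous CDF with inverse Q, let F̂ : ℝ → ℝ be a right-continuous step function (the empirical CDF of a sample with values in [a,b]) with F̂(a⁻)=0, F̂(b)=1, and let φ : [0,1] → ℝ be of bounded variation. Then the change-of-variables identity ∫_0^1 φ(z) d[F̂(Q(z)) - z] = ∫_a^b φ(F(x)) d[F̂(x) - F(x)] holds (Riemann–Stieltjes integrals). -/
/-!
Both integrals are limits of Riemann sums, so it suffices to exhibit, for every mesh bound,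
partitions of `[0,1]` and of `[a,b]` whose left-tagged Riemann sums coincide. A uniform
partition `p` of `[0,1]` and its image `Q ∘ p` do: `Q` is monotone and sends `0, 1` to `a, b`,
and `F ∘ Q = id` turns each term `φ (p i) * Δ(F̂ ∘ Q - id)` into `φ (F (Q (p i))) * Δ(F̂ - F)`.
The mesh of `Q ∘ p` is small because `Q`, a monotone map of `[0,1]` onto `[a,b]`, is
uniformly continuous.
-/

/-- `RSIntegralEq f g a b I` : the Riemann–Stieltjes integral `∫_a^b f dg` exists
and equals `I`. -/
def RSIntegralEq (f g : ℝ → ℝ) (a b I : ℝ) : Prop :=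
  ∀ ε > 0, ∃ δ > 0, ∀ (n : ℕ) (p t : ℕ → ℝ),
    0 < n → p 0 = a → p n = b → (∀ i < n, p i ≤ p (i + 1)) →
    (∀ i < n, p (i + 1) - p i < δ) →
    (∀ i < n, t i ∈ Set.Icc (p i) (p (i + 1))) →
    |(∑ i ∈ Finset.range n, f (t i) * (g (p (i + 1)) - g (p i))) - I| < ε

open Set

theorem MonotoneOn.continuousOn_of_surjOn_Icc {f : ℝ → ℝ} {a b c d : ℝ}
    (hf : MonotoneOn f (Icc c d)) (hmaps : MapsTo f (Icc c d) (Icc a b))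
    (hsurj : SurjOn f (Icc c d) (Icc a b)) : ContinuousOn f (Icc c d) := by
  rw [continuousOn_iff_continuous_domRestrict]
  have hrestrict : Continuous (hmaps.restrict f) := by
    refine Monotone.continuous_of_surjective (fun x y hxy => hf x.2 y.2 hxy) ?_
    rintro ⟨y, hy⟩
    obtain ⟨x, hx, rfl⟩ := hsurj hy
    exact ⟨⟨x, hx⟩, rfl⟩
  exact continuous_subtype_val.comp hrestrict

noncomputable def uniformPartition (c d : ℝ) (n i : ℕ) : ℝ := c + i * ((d - c) / n)

section uniformPartition

variable {c d : ℝ} {n : ℕ}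

@[simp]
theorem uniformPartition_zero : uniformPartition c d n 0 = c := by
  simp [uniformPartition]

theorem uniformPartition_self (hn : n ≠ 0) : uniformPartition c d n n = d := by
  have : (n : ℝ) ≠ 0 := Nat.cast_ne_zero.mpr hn
  simp only [uniformPartition]
  field_simp
  ring

theorem uniformPartition_succ_sub (i : ℕ) :
    uniformPartition c d n (i + 1) - uniformPartition c d n i = (d - c) / n := by
  simp only [uniformPartition]; push_cast; ring

theorem uniformPartition_monotone (hcd : c ≤ d) : Monotone (uniformPartition c d n) :=
  fun i j hij => by
    unfold uniformPartition
    gcongr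

theorem uniformPartition_mem_Icc (hcd : c ≤ d) (hn : n ≠ 0) {i : ℕ} (hi : i ≤ n) :
    uniformPartition c d n i ∈ Icc c d := by
  have hmono := uniformPartition_monotone (n := n) hcd
  refine ⟨?_, ?_⟩
  · simpa using hmono (Nat.zero_le i)
  · simpa [uniformPartition_self hn] using hmono hi

theorem exists_uniformPartition_succ_sub_lt (hcd : c ≤ d) {δ : ℝ} (hδ : 0 < δ) :
    ∃ n : ℕ, 0 < n ∧ ∀ i, uniformPartition c d n (i + 1) - uniformPartition c d n i < δ := by
  obtain ⟨n, hn⟩ := exists_nat_gt ((d - c) / δ)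
  have hnpos : (0 : ℝ) < n := (div_nonneg (sub_nonneg.mpr hcd) hδ.le).trans_lt hn
  refine ⟨n, Nat.cast_pos.mp hnpos, fun i => ?_⟩
  rw [uniformPartition_succ_sub, div_lt_iff₀ hnpos]
  rwa [div_lt_iff₀ hδ, mul_comm] at hn

end uniformPartition

theorem RSIntegralEq.eq_of_comp {f g f' g' Q : ℝ → ℝ} {a b c d I J : ℝ} (hcd : c ≤ d)
    (hQmono : MonotoneOn Q (Icc c d)) (hQcont : ContinuousOn Q (Icc c d))
    (hQc : Q c = a) (hQd : Q d = b)
    (hf : EqOn f' (f ∘ Q) (Icc c d)) (hg : EqOn g' (g ∘ Q) (Icc c d))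
    (hI : RSIntegralEq f' g' c d I) (hJ : RSIntegralEq f g a b J) : I = J := by
  refine eq_of_forall_dist_le fun ε hε => ?_
  obtain ⟨δI, hδI, hI⟩ := hI (ε / 2) (half_pos hε)
  obtain ⟨δJ, hδJ, hJ⟩ := hJ (ε / 2) (half_pos hε)
  obtain ⟨δQ, hδQ, hQuc⟩ := Metric.uniformContinuousOn_iff.mp
    (isCompact_Icc.uniformContinuousOn_of_continuous hQcont) δJ hδJ
  obtain ⟨n, hn, hmesh⟩ := exists_uniformPartition_succ_sub_lt hcd (lt_min hδI hδQ)
  set p := uniformPartition c d n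
  have hp : Monotone p := uniformPartition_monotone hcd
  have hpmem : ∀ i ≤ n, p i ∈ Icc c d := fun i hi => uniformPartition_mem_Icc hcd hn.ne' hi
  have hQp_mono : ∀ i < n, Q (p i) ≤ Q (p (i + 1)) := fun i hi =>
    hQmono (hpmem i hi.le) (hpmem (i + 1) hi) (hp i.le_succ)
  have hQp_mesh : ∀ i < n, Q (p (i + 1)) - Q (p i) < δJ := fun i hi => by
    have hdist : dist (p (i + 1)) (p i) < δQ := by
      rw [Real.dist_eq, abs_of_nonneg (sub_nonneg.mpr (hp i.le_succ))]
      exact (hmesh i).trans_le (min_le_right _ _)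
    have := hQuc _ (hpmem (i + 1) hi) _ (hpmem i hi.le) hdist
    exact (le_abs_self _).trans_lt (Real.dist_eq _ _ ▸ this)
  have hsum : (∑ i ∈ Finset.range n, f' (p i) * (g' (p (i + 1)) - g' (p i))) =
      ∑ i ∈ Finset.range n, f (Q (p i)) * (g (Q (p (i + 1))) - g (Q (p i))) := by
    refine Finset.sum_congr rfl fun i hi => ?_
    have hi := Finset.mem_range.mp hi
    rw [hf (hpmem i hi.le), hg (hpmem i hi.le), hg (hpmem (i + 1) hi)]
    rfl
  have hSI := hI n p p hn uniformPartition_zero (uniformPartition_self hn.ne')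
    (fun i _ => hp i.le_succ) (fun i _ => (hmesh i).trans_le (min_le_left _ _))
    (fun i _ => ⟨le_rfl, hp i.le_succ⟩)
  have hSJ := hJ n (fun i => Q (p i)) (fun i => Q (p i)) hn (by simp [p, hQc])
    (by simp [p, uniformPartition_self hn.ne', hQd]) hQp_mono hQp_mesh
    (fun i hi => ⟨le_rfl, hQp_mono i hi⟩)
  rw [hsum] at hSI
  calc dist I J ≤ dist _ I + dist _ J := dist_triangle_left _ _ _
    _ ≤ ε := by rw [Real.dist_eq, Real.dist_eq]; linarith

theorem stmt_16_general (a b : ℝ) (hab : a < b) (F Q Fhat φ : ℝ → ℝ)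
    (hFmono : StrictMonoOn F (Set.Icc a b))
    (hFa : F a = 0) (hFb : F b = 1)
    (hQF : ∀ x ∈ Set.Icc a b, Q (F x) = x)
    (hFQ : ∀ z ∈ Set.Icc (0:ℝ) 1, F (Q z) = z ∧ Q z ∈ Set.Icc a b)
    (I J : ℝ)
    (hI : RSIntegralEq φ (fun z => Fhat (Q z) - z) 0 1 I)
    (hJ : RSIntegralEq (fun x => φ (F x)) (fun x => Fhat x - F x) a b J) :
    I = J := by
  have ha : a ∈ Icc a b := left_mem_Icc.mpr hab.le
  have hb : b ∈ Icc a b := right_mem_Icc.mpr hab.le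
  have hFmaps : MapsTo F (Icc a b) (Icc 0 1) := fun x hx =>
    ⟨hFa ▸ hFmono.monotoneOn ha hx hx.1, hFb ▸ hFmono.monotoneOn hx hb hx.2⟩
  have hQmaps : MapsTo Q (Icc 0 1) (Icc a b) := fun z hz => (hFQ z hz).2
  have hQsurj : SurjOn Q (Icc 0 1) (Icc a b) := fun x hx => ⟨F x, hFmaps hx, hQF x hx⟩
  have hQmono : MonotoneOn Q (Icc 0 1) := fun z hz z' hz' hzz' =>
    (hFmono.le_iff_le (hQmaps hz) (hQmaps hz')).mp (by rwa [(hFQ z hz).1, (hFQ z' hz').1])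
  refine RSIntegralEq.eq_of_comp zero_le_one hQmono
    (hQmono.continuousOn_of_surjOn_Icc hQmaps hQsurj) (hFa ▸ hQF a ha) (hFb ▸ hQF b hb)
    (fun z hz => ?_) (fun z hz => ?_) hI hJ <;> simp [(hFQ z hz).1]

theorem stmt_16 (a b : ℝ) (hab : a < b) (F Q Fhat φ : ℝ → ℝ)
    (hFc : ContinuousOn F (Set.Icc a b))
    (hFmono : StrictMonoOn F (Set.Icc a b))
    (hFa : F a = 0) (hFb : F b = 1)
    (hQF : ∀ x ∈ Set.Icc a b, Q (F x) = x)
    (hFQ : ∀ z ∈ Set.Icc (0:ℝ) 1, F (Q z) = z ∧ Q z ∈ Set.Icc a b)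
    (hFhat : BoundedVariationOn Fhat (Set.Icc a b))
    (hφ : Continuous φ)
    (I J : ℝ)
    (hI : RSIntegralEq φ (fun z => Fhat (Q z) - z) 0 1 I)
    (hJ : RSIntegralEq (fun x => φ (F x)) (fun x => Fhat x - F x) a b J) :
    I = J :=
  stmt_16_general a b hab F Q Fhat φ hFmono hFa hFb hQF hFQ I J hI hJ
end
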